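/- arXiv:quant-ph/0404071 — 2 statements merged into one kernel-verified Lean document; each statement's English description precedes it below -/
import Mathlib

section
/- Let (Σ, L, ξ) be a state property system with Cartan map κ. Then every two properties of L are separated by a superselection rule (i.e. a ssr b for all a, b ∈ L) if and only if the associated closure space (Σ, κ(L)) is a topological space, i.e. the collection κ(L) is additionally closed under finite unions (so that κ(L) is exactly the family of closed sets of a topology on Σ). -/
/-- The Cartan map of a state property system: `κ a = {p | a ∈ ξ p}`. -/
def cartan {S L : Type*} (ξ : S → Set L) (a : L) : Set S := {p | a ∈ ξ p}

/-- `(S, L, ξ)` is a state property system. -/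
structure IsSPS {S L : Type*} [CompleteLattice L] (ξ : S → Set L) : Prop where
  bot_not_mem : ∀ p, (⊥ : L) ∉ ξ p
  sInf_mem : ∀ p (A : Set L), (∀ a ∈ A, a ∈ ξ p) → sInf A ∈ ξ p
  le_iff : ∀ a b : L, a ≤ b ↔ ∀ r, a ∈ ξ r → b ∈ ξ r
/-- `a` and `b` are separated by a superselection rule. -/
def Ssr {S L : Type*} [CompleteLattice L] (ξ : S → Set L) (a b : L) : Prop :=
  ∀ p, a ⊔ b ∈ ξ p → a ∈ ξ p ∨ b ∈ ξ p

def IsClassicalProp {S L : Type*} [CompleteLattice L] (ξ : S → Set L) (a : L) : Prop :=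
  ∃ ac : L, a ⊔ ac = ⊤ ∧ a ⊓ ac = ⊥ ∧ Ssr ξ a ac

theorem ssr_iff_cartan_sup_subset {S L : Type*} [CompleteLattice L] {ξ : S → Set L} {a b : L} :
    Ssr ξ a b ↔ cartan ξ (a ⊔ b) ⊆ cartan ξ a ∪ cartan ξ b :=
  Iff.rfl

namespace IsSPS

variable {S L : Type*} [CompleteLattice L] {ξ : S → Set L}

theorem cartan_subset_cartan_iff (hξ : IsSPS ξ) {a b : L} :
    cartan ξ a ⊆ cartan ξ b ↔ a ≤ b :=
  (hξ.le_iff a b).symm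

theorem monotone_cartan (hξ : IsSPS ξ) : Monotone (cartan ξ) :=
  fun _ _ hab => hξ.cartan_subset_cartan_iff.mpr hab

theorem ssr_iff_cartan_sup (hξ : IsSPS ξ) {a b : L} :
    Ssr ξ a b ↔ cartan ξ (a ⊔ b) = cartan ξ a ∪ cartan ξ b := by
  rw [ssr_iff_cartan_sup_subset]
  exact ⟨fun h => h.antisymm (hξ.monotone_cartan.le_map_sup a b), Eq.subset⟩

/-- Since `κ` reflects the order, any `c` with `κ c = κ a ∪ κ b` lies above `a ⊔ b`,
so `κ (a ⊔ b)` is squeezed between `κ a ∪ κ b` and `κ c`. -/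
theorem cartan_union_mem_range_iff_ssr (hξ : IsSPS ξ) {a b : L} :
    cartan ξ a ∪ cartan ξ b ∈ Set.range (cartan ξ) ↔ Ssr ξ a b := by
  refine ⟨?_, fun h => ⟨a ⊔ b, hξ.ssr_iff_cartan_sup.mp h⟩⟩
  rintro ⟨c, hc⟩
  have hsup : a ⊔ b ≤ c := sup_le
    (hξ.cartan_subset_cartan_iff.mp (hc ▸ Set.subset_union_left))
    (hξ.cartan_subset_cartan_iff.mp (hc ▸ Set.subset_union_right))
  exact ssr_iff_cartan_sup_subset.mpr (hc ▸ hξ.monotone_cartan hsup)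

end IsSPS

/-- every two properties are separated by a superselection rule iff
`(Σ, κ(L))` is a topological space, i.e. `κ(L)` is additionally closed under finite
unions (together with `∅, Σ ∈ κ(L)` and closure under intersections, which always hold,
this means `κ(L)` is exactly the family of closed sets of a topology on `Σ`). -/
theorem stmt6 {S L : Type*} [CompleteLattice L] (ξ : S → Set L) (hξ : IsSPS ξ) :
    (∀ a b : L, Ssr ξ a b) ↔
    (∀ A ∈ Set.range (cartan ξ), ∀ B ∈ Set.range (cartan ξ),
      A ∪ B ∈ Set.range (cartan ξ)) := by
  simp only [Set.forall_mem_range, hξ.cartan_union_mem_range_iff_ssr]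
end

section
/- Let (X, F) be a closure space, let Ω be the set of connection components of (X, F), and let q : X → Ω be the canonical surjection sending each point to its connection component. Equip Ω with the quotient closure structure C = {B ⊆ Ω | q⁻¹(B) ∈ F}. Then (Ω, C) is a closure space, q is continuous, and (Ω, C) is totally disconnected, i.e. for every ω ∈ Ω the connection component of ω in (Ω, C) is the singleton {ω}. -/
/-- `F` is the family of closed sets of a closure space on `X`. -/
def IsClosureSpace {X : Type*} (F : Set (Set X)) : Prop :=
  ∅ ∈ F ∧ Set.univ ∈ F ∧ ∀ G ⊆ F, G.Nonempty → ⋂₀ G ∈ F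
/-- `B` is a closed set of the subspace induced on `A` by the closure structure `F`. -/
def SubClosed {X : Type*} (F : Set (Set X)) (A B : Set X) : Prop :=
  ∃ f ∈ F, B = f ∩ A

/-- `A` is a connected subset: the only clopen subsets of the induced subspace are `∅` and `A`. -/
def IsConnSubset {X : Type*} (F : Set (Set X)) (A : Set X) : Prop :=
  ∀ B ⊆ A, SubClosed F A B → SubClosed F A (A \ B) → B = ∅ ∨ B = A

/-- The connection component of `x`: the union of all connected subsets containing `x`. -/
def connComp {X : Type*} (F : Set (Set X)) (x : X) : Set X :=
  ⋃₀ {A : Set X | x ∈ A ∧ IsConnSubset F A}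

/-!
Components are connected, and closed because the closure of a connected set is connected.
The fibres of `q` are the components, so a connected fibre lies on one side of any relatively
clopen subset of a saturated set; relatively clopen subsets of saturated sets are therefore
saturated, and the quotient structure makes the preimage of a closed connected subset of `Ω`
connected. The preimage of the component of `q x` is thus contained in the component of `x`,
which is the fibre over `q x`.
-/

open Set Function

namespace IsClosureSpace

variable {X : Type*} {F : Set (Set X)}

theorem inter_mem (hF : IsClosureSpace F) {a b : Set X} (ha : a ∈ F) (hb : b ∈ F) :
    a ∩ b ∈ F := by
  rw [← sInter_pair]
  exact hF.2.2 _ (pair_subset ha hb) (insert_nonempty a {b})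

theorem preimage {Y : Type*} (hF : IsClosureSpace F) (q : X → Y) :
    IsClosureSpace {B : Set Y | q ⁻¹' B ∈ F} := by
  refine ⟨by simpa using hF.1, by simpa using hF.2.1, fun G hG hGne => ?_⟩
  change q ⁻¹' ⋂₀ G ∈ F
  rw [preimage_sInter, ← sInter_image]
  exact hF.2.2 _ (image_subset_iff.mpr hG) (hGne.image _)

end IsClosureSpace

section Connectedness

variable {X : Type*} {F : Set (Set X)}

variable (F) in
theorem subClosed_of_mem {A D : Set X} (hD : D ∈ F) (hDA : D ⊆ A) : SubClosed F A D :=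
  ⟨D, hD, (inter_eq_left.mpr hDA).symm⟩

theorem SubClosed.mem (hF : IsClosureSpace F) {A D : Set X} (hA : A ∈ F)
    (hD : SubClosed F A D) : D ∈ F := by
  obtain ⟨f, hf, rfl⟩ := hD
  exact hF.inter_mem hf hA

theorem SubClosed.inter_of_subset {W B A : Set X} (hB : SubClosed F W B) (hAW : A ⊆ W) :
    SubClosed F A (B ∩ A) := by
  obtain ⟨f, hf, rfl⟩ := hB
  exact ⟨f, hf, by rw [inter_assoc, inter_eq_right.mpr hAW]⟩

theorem IsConnSubset.subset_or_disjoint {A W B : Set X} (hA : IsConnSubset F A) (hAW : A ⊆ W)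
    (hB : SubClosed F W B) (hB' : SubClosed F W (W \ B)) : A ⊆ B ∨ Disjoint A B := by
  have hcompl : A \ (B ∩ A) = (W \ B) ∩ A := by
    ext z
    have := @hAW z
    simp only [mem_sdiff, mem_inter_iff]
    tauto
  rcases hA (B ∩ A) inter_subset_right (hB.inter_of_subset hAW)
      (hcompl ▸ hB'.inter_of_subset hAW) with h | h
  · exact Or.inr (disjoint_iff_inter_eq_empty.mpr (by rw [inter_comm, h]))
  · exact Or.inl (inter_eq_right.mp h)

variable (F) in
theorem isConnSubset_singleton (x : X) : IsConnSubset F {x} := fun _ hB _ _ =>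
  subset_singleton_iff_eq.mp hB

variable (F) in
theorem isConnSubset_sUnion {S : Set (Set X)} {x : X} (hx : ∀ A ∈ S, x ∈ A)
    (hS : ∀ A ∈ S, IsConnSubset F A) : IsConnSubset F (⋃₀ S) := by
  intro B hB hB₁ hB₂
  have hside : ∀ A ∈ S, A ⊆ B ∨ Disjoint A B := fun A hA =>
    (hS A hA).subset_or_disjoint (subset_sUnion_of_mem hA) hB₁ hB₂
  by_cases hxB : x ∈ B
  · refine Or.inr (hB.antisymm fun y ⟨A, hA, hyA⟩ => ?_)
    rcases hside A hA with h | h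
    · exact h hyA
    · exact absurd hxB (disjoint_left.mp h (hx A hA))
  · refine Or.inl (eq_empty_of_forall_notMem fun y hyB => ?_)
    obtain ⟨A, hA, hyA⟩ := hB hyB
    rcases hside A hA with h | h
    · exact hxB (h (hx A hA))
    · exact disjoint_left.mp h hyA hyB

variable (F) in
theorem mem_connComp (x : X) : x ∈ connComp F x :=
  mem_sUnion.mpr ⟨{x}, ⟨rfl, isConnSubset_singleton F x⟩, rfl⟩

variable (F) in
theorem isConnSubset_connComp (x : X) : IsConnSubset F (connComp F x) :=
  isConnSubset_sUnion F (fun _ hA => hA.1) fun _ hA => hA.2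

theorem IsConnSubset.subset_connComp {A : Set X} {x : X} (hA : IsConnSubset F A) (hx : x ∈ A) :
    A ⊆ connComp F x :=
  subset_sUnion_of_mem ⟨hx, hA⟩

variable (F) in
theorem connComp_eq_iff_mem {x y : X} : connComp F y = connComp F x ↔ y ∈ connComp F x := by
  refine ⟨fun h => h ▸ mem_connComp F y, fun h => ?_⟩
  have hxy : connComp F x ⊆ connComp F y := (isConnSubset_connComp F x).subset_connComp h
  exact ((isConnSubset_connComp F y).subset_connComp (hxy (mem_connComp F x))).antisymm hxy

variable (F) in
def closureOf (A : Set X) : Set X := ⋂₀ {g | g ∈ F ∧ A ⊆ g}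

variable (F) in
theorem subset_closureOf (A : Set X) : A ⊆ closureOf F A :=
  subset_sInter fun _ hg => hg.2

theorem closureOf_mem (hF : IsClosureSpace F) (A : Set X) : closureOf F A ∈ F :=
  hF.2.2 _ (fun _ hg => hg.1) ⟨univ, hF.2.1, subset_univ A⟩

theorem SubClosed.eq_closureOf_of_subset {A D : Set X} (hD : SubClosed F (closureOf F A) D)
    (hAD : A ⊆ D) : D = closureOf F A := by
  obtain ⟨h, hh, rfl⟩ := hD
  exact inter_eq_right.mpr (sInter_subset_of_mem ⟨hh, hAD.trans inter_subset_left⟩)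

theorem IsConnSubset.closure {A : Set X} (hA : IsConnSubset F A) :
    IsConnSubset F (closureOf F A) := by
  intro B hB hB₁ hB₂
  rcases hA.subset_or_disjoint (subset_closureOf F A) hB₁ hB₂ with h | h
  · exact Or.inr (hB₁.eq_closureOf_of_subset h)
  · have hAc : A ⊆ closureOf F A \ B := subset_sdiff.mpr ⟨subset_closureOf F A, h⟩
    have hdisj : Disjoint (closureOf F A) B := sdiff_eq_left.mp (hB₂.eq_closureOf_of_subset hAc)
    exact Or.inl (disjoint_self.mp (hdisj.mono_left hB))

theorem connComp_mem (hF : IsClosureSpace F) (x : X) : connComp F x ∈ F := by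
  have hsub : closureOf F (connComp F x) ⊆ connComp F x :=
    (isConnSubset_connComp F x).closure.subset_connComp
      (subset_closureOf F _ (mem_connComp F x))
  rw [← hsub.antisymm (subset_closureOf F _)]
  exact closureOf_mem hF _

end Connectedness

section Quotient

variable {X Y : Type*} {F : Set (Set X)} {q : X → Y}

theorem preimage_image_eq_of_subClosed (hfib : ∀ y, IsConnSubset F (q ⁻¹' {y}))
    {V : Set Y} {D : Set X} (hDV : D ⊆ q ⁻¹' V) (hD : SubClosed F (q ⁻¹' V) D)
    (hD' : SubClosed F (q ⁻¹' V) (q ⁻¹' V \ D)) : q ⁻¹' (q '' D) = D := by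
  refine (subset_preimage_image q D).antisymm' ?_
  rintro z ⟨w, hw, hqw⟩
  have hfibV : q ⁻¹' {q w} ⊆ q ⁻¹' V := preimage_mono (singleton_subset_iff.mpr (hDV hw))
  rcases (hfib (q w)).subset_or_disjoint hfibV hD hD' with h | h
  · exact h hqw.symm
  · exact absurd hw (disjoint_left.mp h rfl)

theorem isConnSubset_preimage (hF : IsClosureSpace F) (hq : Surjective q)
    (hfib : ∀ y, IsConnSubset F (q ⁻¹' {y})) {V : Set Y} (hVF : q ⁻¹' V ∈ F)
    (hV : IsConnSubset {B | q ⁻¹' B ∈ F} V) : IsConnSubset F (q ⁻¹' V) := by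
  intro B hBW hB hB'
  have hB'' : SubClosed F (q ⁻¹' V) (q ⁻¹' V \ (q ⁻¹' V \ B)) := by
    rwa [sdiff_sdiff_cancel_left hBW]
  have hsat : q ⁻¹' (q '' B) = B := preimage_image_eq_of_subClosed hfib hBW hB hB'
  have hsat' : q ⁻¹' (q '' (q ⁻¹' V \ B)) = q ⁻¹' V \ B :=
    preimage_image_eq_of_subClosed hfib sdiff_subset hB' hB''
  have hcompl : V \ q '' B = q '' (q ⁻¹' V \ B) :=
    hq.preimage_injective (by rw [preimage_sdiff, hsat, hsat'])
  have himage : ∀ D ⊆ q ⁻¹' V, SubClosed F (q ⁻¹' V) D → q ⁻¹' (q '' D) = D →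
      SubClosed {B | q ⁻¹' B ∈ F} V (q '' D) := fun D hDW hD hDsat =>
    subClosed_of_mem _ (show q ⁻¹' (q '' D) ∈ F by rw [hDsat]; exact hD.mem hF hVF)
      (image_subset_iff.mpr hDW)
  rcases hV (q '' B) (image_subset_iff.mpr hBW) (himage B hBW hB hsat)
      (hcompl ▸ himage _ sdiff_subset hB' hsat') with h | h
  · exact Or.inl (by rw [← hsat, h, preimage_empty])
  · exact Or.inr (by rw [← hsat, h])

end Quotient

/-- the quotient of a closure space by its connection components, with
the quotient closure structure, is a closure space, the canonical surjection is
continuous, and the quotient is totally disconnected. -/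
theorem stmt14 {X : Type*} (F : Set (Set X)) (hF : IsClosureSpace F) :
    let Ω := {A : Set X // ∃ x : X, A = connComp F x}
    let q : X → Ω := fun x => ⟨connComp F x, x, rfl⟩
    let C : Set (Set Ω) := {B | q ⁻¹' B ∈ F}
    IsClosureSpace C ∧ (∀ B ∈ C, q ⁻¹' B ∈ F) ∧
    (∀ ω : Ω, connComp C ω = {ω}) := by
  intro Ω q C
  have hq : Surjective q := fun ⟨_, x, hx⟩ => ⟨x, Subtype.ext hx.symm⟩
  have hfiber : ∀ x, q ⁻¹' {q x} = connComp F x := fun x =>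
    ext fun _ => Subtype.ext_iff.trans (connComp_eq_iff_mem F)
  have hC : IsClosureSpace C := hF.preimage q
  refine ⟨hC, fun _ hB => hB, fun ω => ?_⟩
  obtain ⟨x, rfl⟩ := hq ω
  refine (singleton_subset_iff.mpr (mem_connComp C (q x))).antisymm' ?_
  have hconn : IsConnSubset F (q ⁻¹' connComp C (q x)) := by
    refine isConnSubset_preimage hF hq (fun y => ?_) (connComp_mem hC _)
      (isConnSubset_connComp C _)
    obtain ⟨z, rfl⟩ := hq y
    exact hfiber z ▸ isConnSubset_connComp F z
  have hsub : q ⁻¹' connComp C (q x) ⊆ q ⁻¹' {q x} :=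
    hfiber x ▸ hconn.subset_connComp (mem_connComp C (q x))
  exact hq.preimage_subset_preimage_iff.mp hsub
end
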